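/- arXiv:2402.17466 — 2 statements merged into one kernel-verified Lean document; each statement's English description precedes it below -/
import Mathlib

section
/- Let P be an N×N column-stochastic nonnegative matrix that is primitive. Then for iterations α[m+1] = P α[m] and π[m+1] = P π[m] with π[0] = 1 (all-ones vector), the ratio μ_j[m] = α_j[m]/π_j[m] converges, as m → ∞, to (Σ_j α_j[0])/N for every j. -/
open Matrix Filter

section aux
variable {N : ℕ} (P : Matrix (Fin N) (Fin N) ℝ)

lemma aux_pow_nonneg (hnonneg : ∀ i j, 0 ≤ P i j) : ∀ n i j, 0 ≤ (P ^ n) i j := by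
  intro n
  induction n with
  | zero =>
    intro i j
    rcases eq_or_ne i j with h | h
    · simp [h, Matrix.one_apply]
    · simp [Matrix.one_apply_ne h]
  | succ n ih =>
    intro i j
    rw [pow_succ, Matrix.mul_apply]
    exact Finset.sum_nonneg fun l _ => mul_nonneg (ih i l) (hnonneg l j)

lemma aux_pow_col (hcol : ∀ j, ∑ i, P i j = 1) : ∀ n j, ∑ i, (P ^ n) i j = 1 := by
  intro n
  induction n with
  | zero => intro j; simp [Matrix.one_apply]
  | succ n ih =>
    intro j
    simp only [pow_succ, Matrix.mul_apply]
    rw [Finset.sum_comm]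
    have : ∀ l, ∑ i, (P ^ n) i l * P l j = P l j := by
      intro l
      rw [← Finset.sum_mul, ih l, one_mul]
    rw [Finset.sum_congr rfl fun l _ => this l]
    exact hcol j

lemma aux_iter (x : ℕ → Fin N → ℝ) (hx : ∀ m, x (m + 1) = P *ᵥ x m) :
    ∀ m n, x (m + n) = (P ^ n) *ᵥ x m := by
  intro m n
  induction n with
  | zero => simp
  | succ n ih =>
    have h : m + (n + 1) = (m + n) + 1 := by ring
    rw [h, hx, ih, Matrix.mulVec_mulVec, ← pow_succ']

lemma aux_sum_mulVec (hcol : ∀ j, ∑ i, P i j = 1) (n : ℕ) (x : Fin N → ℝ) :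
    ∑ j, ((P ^ n) *ᵥ x) j = ∑ j, x j := by
  simp only [Matrix.mulVec, dotProduct]
  rw [Finset.sum_comm]
  refine Finset.sum_congr rfl fun i _ => ?_
  rw [← Finset.sum_mul, aux_pow_col P hcol n i, one_mul]

end aux


/-- Asymptotic correctness of ratio consensus: if `P` is column stochastic, nonnegative
and primitive, under `α[m+1] = P α[m]`, `π[m+1] = P π[m]` with `π[0] = 1`, each ratio
`α_j[m]/π_j[m]` converges to the average `(Σ_j α_j[0]) / N`. -/
theorem stmt8 {N : ℕ} (hN : 0 < N) (P : Matrix (Fin N) (Fin N) ℝ)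
    (hnonneg : ∀ i j, 0 ≤ P i j)
    (hcol : ∀ j, ∑ i, P i j = 1)
    (hprim : ∃ k : ℕ, ∀ i j, 0 < (P ^ k) i j)
    (a pi' : ℕ → Fin N → ℝ)
    (ha : ∀ m, a (m + 1) = P *ᵥ a m)
    (hpi : ∀ m, pi' (m + 1) = P *ᵥ pi' m)
    (hpi0 : pi' 0 = fun _ => 1) :
    ∀ j, Filter.Tendsto (fun m => a m j / pi' m j) Filter.atTop
      (nhds ((∑ j, a 0 j) / N)) := by
  haveI : Nonempty (Fin N) := ⟨⟨0, hN⟩⟩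
  -- choose k ≥ 1 with P^k positive
  obtain ⟨k, hk1, hkpos⟩ : ∃ k, 1 ≤ k ∧ ∀ i j, 0 < (P ^ k) i j := by
    obtain ⟨k, hk⟩ := hprim
    rcases Nat.eq_zero_or_pos k with rfl | hpos
    · refine ⟨1, le_refl 1, fun i j => ?_⟩
      have hNsub : ∀ i j : Fin N, i = j := by
        intro i j
        by_contra h
        have := hk i j
        rw [pow_zero, Matrix.one_apply_ne h] at this
        exact lt_irrefl 0 this
      have hi : i = j := hNsub i j
      subst hi
      have h1 : ∑ i', P i' i = 1 := hcol i
      have hsingle : ∑ i', P i' i = P i i := by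
        apply Finset.sum_eq_single_of_mem i (Finset.mem_univ i)
        intro b _ hb
        exact absurd (hNsub b i) hb
      rw [pow_one]
      rw [hsingle] at h1
      rw [h1]; norm_num
    · exact ⟨k, hpos, hk⟩
  have hQnn := aux_pow_nonneg P hnonneg
  have hQcol := aux_pow_col P hcol
  -- every row of P has a positive entry
  have hrow : ∀ i, ∃ l, 0 < P i l := by
    intro i
    have hkk : 0 < (P ^ k) i i := hkpos i i
    obtain ⟨k', rfl⟩ := Nat.exists_eq_add_of_le hk1
    rw [show 1 + k' = k' + 1 from by omega, pow_succ', Matrix.mul_apply] at hkk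
    by_contra h
    push_neg at h
    have : ∀ l ∈ Finset.univ, P i l * (P ^ k') l i ≤ 0 := by
      intro l _
      have h1 : P i l = 0 := le_antisymm (h l) (hnonneg i l)
      rw [h1, zero_mul]
    exact absurd hkk (not_lt.mpr (Finset.sum_nonpos this))
  -- positivity of pi'
  have hpipos : ∀ m j, 0 < pi' m j := by
    intro m
    induction m with
    | zero => intro j; rw [hpi0]; norm_num
    | succ m ih =>
      intro j
      rw [hpi m]
      simp only [Matrix.mulVec, dotProduct]
      obtain ⟨l, hl⟩ := hrow j
      exact Finset.sum_pos' (fun i _ => mul_nonneg (hnonneg j i) (ih i).le)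
        ⟨l, Finset.mem_univ l, mul_pos hl (ih l)⟩
  -- iteration formulas
  have haiter : ∀ m n j, a (m + n) j = ∑ i, (P ^ n) j i * a m i := by
    intro m n j
    rw [aux_iter P a ha m n]
    rfl
  have hpiter : ∀ m n j, pi' (m + n) j = ∑ i, (P ^ n) j i * pi' m i := by
    intro m n j
    rw [aux_iter P pi' hpi m n]
    rfl
  -- sum conservation
  have hsuma : ∀ m, ∑ j, a m j = ∑ j, a 0 j := by
    intro m
    have := aux_iter P a ha 0 m
    rw [zero_add] at this
    rw [this, aux_sum_mulVec P hcol]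
  have hsumpi : ∀ m, ∑ j, pi' m j = N := by
    intro m
    have h := aux_iter P pi' hpi 0 m
    rw [zero_add] at h
    rw [h, aux_sum_mulVec P hcol, hpi0]
    simp
  have hNR : (0 : ℝ) < N := by exact_mod_cast hN
  -- pi' upper bound
  have hpile : ∀ m j, pi' m j ≤ N := by
    intro m j
    calc pi' m j ≤ ∑ i, pi' m i :=
          Finset.single_le_sum (fun i _ => (hpipos m i).le) (Finset.mem_univ j)
      _ = N := hsumpi m
  -- minimal entry of P^k
  obtain ⟨⟨i₀, j₀⟩, hmin⟩ := Finite.exists_min (fun p : Fin N × Fin N => (P ^ k) p.1 p.2)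
  set ε : ℝ := (P ^ k) i₀ j₀ with hεdef
  have hε : 0 < ε := hkpos i₀ j₀
  have hεle : ∀ i j, ε ≤ (P ^ k) i j := fun i j => hmin (i, j)
  -- pi' lower bound for m ≥ k
  have hpilow : ∀ m, k ≤ m → ∀ j, ε * N ≤ pi' m j := by
    intro m hm j
    have hsplit : m = (m - k) + k := (Nat.sub_add_cancel hm).symm
    rw [hsplit, hpiter (m - k) k j]
    calc ε * (N : ℝ) = ε * ∑ i, pi' (m - k) i := by rw [hsumpi]
      _ = ∑ i, ε * pi' (m - k) i := by rw [Finset.mul_sum]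
      _ ≤ ∑ i, (P ^ k) j i * pi' (m - k) i := by
          refine Finset.sum_le_sum fun i _ => ?_
          exact mul_le_mul_of_nonneg_right (hεle j i) (hpipos _ i).le
  -- the ratio sequence and its sup/inf
  set μ : ℕ → Fin N → ℝ := fun m j => a m j / pi' m j with hμdef
  have hne : (Finset.univ : Finset (Fin N)).Nonempty := Finset.univ_nonempty
  set Ms : ℕ → ℝ := fun m => Finset.univ.sup' hne (μ m) with hMsdef
  set Mi : ℕ → ℝ := fun m => Finset.univ.inf' hne (μ m) with hMidef
  have havals : ∀ m i, a m i = μ m i * pi' m i := by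
    intro m i
    exact (div_mul_cancel₀ _ (hpipos m i).ne').symm
  have hle_sup : ∀ m i, μ m i ≤ Ms m := fun m i =>
    Finset.le_sup' (μ m) (Finset.mem_univ i)
  have hinf_le : ∀ m i, Mi m ≤ μ m i := fun m i =>
    Finset.inf'_le (μ m) (Finset.mem_univ i)
  have hoscnn : ∀ m, 0 ≤ Ms m - Mi m := by
    intro m
    have := (hinf_le m ⟨0, hN⟩).trans (hle_sup m ⟨0, hN⟩)
    linarith
  -- generic upper/lower bounds: averages stay within [Mi, Ms]
  have hub : ∀ m n j, a (m + n) j ≤ Ms m * pi' (m + n) j := by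
    intro m n j
    rw [haiter m n j, hpiter m n j, Finset.mul_sum]
    refine Finset.sum_le_sum fun i _ => ?_
    rw [havals m i]
    calc (P ^ n) j i * (μ m i * pi' m i)
        ≤ (P ^ n) j i * (Ms m * pi' m i) := mul_le_mul_of_nonneg_left
          (mul_le_mul_of_nonneg_right (hle_sup m i) (hpipos m i).le) (hQnn n j i)
      _ = Ms m * ((P ^ n) j i * pi' m i) := by ring
  have hlb : ∀ m n j, Mi m * pi' (m + n) j ≤ a (m + n) j := by
    intro m n j
    rw [haiter m n j, hpiter m n j, Finset.mul_sum]
    refine Finset.sum_le_sum fun i _ => ?_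
    rw [havals m i]
    calc Mi m * ((P ^ n) j i * pi' m i)
        = (P ^ n) j i * (Mi m * pi' m i) := by ring
      _ ≤ (P ^ n) j i * (μ m i * pi' m i) := mul_le_mul_of_nonneg_left
          (mul_le_mul_of_nonneg_right (hinf_le m i) (hpipos m i).le) (hQnn n j i)
  have hμub : ∀ m n j, μ (m + n) j ≤ Ms m := by
    intro m n j
    rw [hμdef]
    rw [div_le_iff₀ (hpipos (m + n) j)]
    exact hub m n j
  have hμlb : ∀ m n j, Mi m ≤ μ (m + n) j := by
    intro m n j
    rw [hμdef]
    rw [le_div_iff₀ (hpipos (m + n) j)]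
    exact hlb m n j
  have hMsmono : ∀ m n, Ms (m + n) ≤ Ms m := fun m n =>
    Finset.sup'_le hne _ fun j _ => hμub m n j
  have hMimono : ∀ m n, Mi m ≤ Mi (m + n) := fun m n =>
    le_trans (Finset.le_inf' hne _ fun j _ => hμlb m n j) (le_refl _)
  -- k-step contraction
  have hcontr : ∀ m, k ≤ m →
      Ms (m + k) - Mi (m + k) ≤ (1 - 2 * (ε * ε)) * (Ms m - Mi m) := by
    intro m hm
    obtain ⟨i₁, -, hi₁⟩ := Finset.exists_mem_eq_inf' hne (μ m)
    obtain ⟨i₂, -, hi₂⟩ := Finset.exists_mem_eq_sup' hne (μ m)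
    have hosc := hoscnn m
    have hεN : ε * (ε * N) ≤ ε * (ε * ε) * 0 + ε * (ε * N) := by ring_nf; exact le_refl _
    have hub2 : ∀ j, a (m + k) j ≤ Ms m * pi' (m + k) j - ε * (ε * N) * (Ms m - Mi m) := by
      intro j
      have h1 : ε * (ε * N) ≤ (P ^ k) j i₁ * pi' m i₁ :=
        mul_le_mul (hεle j i₁) (hpilow m hm i₁) (by positivity) (hQnn k j i₁)
      have hdrop : ε * (ε * N) * (Ms m - Mi m) ≤
          (P ^ k) j i₁ * pi' m i₁ * (Ms m - μ m i₁) := by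
        rw [← hi₁]
        exact mul_le_mul_of_nonneg_right h1 hosc
      have hsum : a (m + k) j = Ms m * pi' (m + k) j
          - ∑ i, (P ^ k) j i * pi' m i * (Ms m - μ m i) := by
        rw [haiter m k j, hpiter m k j, Finset.mul_sum, ← Finset.sum_sub_distrib]
        refine Finset.sum_congr rfl fun i _ => ?_
        rw [havals m i]; ring
      have hterm : (P ^ k) j i₁ * pi' m i₁ * (Ms m - μ m i₁) ≤
          ∑ i, (P ^ k) j i * pi' m i * (Ms m - μ m i) :=
        Finset.single_le_sum (f := fun i => (P ^ k) j i * pi' m i * (Ms m - μ m i)) (fun i _ => mul_nonneg (mul_nonneg (hQnn k j i) (hpipos m i).le)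
          (by linarith [hle_sup m i])) (Finset.mem_univ i₁)
      rw [hsum]
      linarith
    have hlb2 : ∀ j, Mi m * pi' (m + k) j + ε * (ε * N) * (Ms m - Mi m) ≤ a (m + k) j := by
      intro j
      have h1 : ε * (ε * N) ≤ (P ^ k) j i₂ * pi' m i₂ :=
        mul_le_mul (hεle j i₂) (hpilow m hm i₂) (by positivity) (hQnn k j i₂)
      have hdrop : ε * (ε * N) * (Ms m - Mi m) ≤
          (P ^ k) j i₂ * pi' m i₂ * (μ m i₂ - Mi m) := by
        rw [← hi₂]
        exact mul_le_mul_of_nonneg_right h1 hosc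
      have hsum : a (m + k) j = Mi m * pi' (m + k) j
          + ∑ i, (P ^ k) j i * pi' m i * (μ m i - Mi m) := by
        rw [haiter m k j, hpiter m k j, Finset.mul_sum, ← Finset.sum_add_distrib]
        refine Finset.sum_congr rfl fun i _ => ?_
        rw [havals m i]; ring
      have hterm : (P ^ k) j i₂ * pi' m i₂ * (μ m i₂ - Mi m) ≤
          ∑ i, (P ^ k) j i * pi' m i * (μ m i - Mi m) :=
        Finset.single_le_sum (f := fun i => (P ^ k) j i * pi' m i * (μ m i - Mi m)) (fun i _ => mul_nonneg (mul_nonneg (hQnn k j i) (hpipos m i).le)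
          (by linarith [hinf_le m i])) (Finset.mem_univ i₂)
      rw [hsum]
      linarith
    have hμub2 : ∀ j, μ (m + k) j ≤ Ms m - ε * ε * (Ms m - Mi m) := by
      intro j
      rw [hμdef]
      rw [div_le_iff₀ (hpipos (m + k) j)]
      have h1 := hub2 j
      have h2 := hpile (m + k) j
      have h3 : 0 ≤ ε * ε * (Ms m - Mi m) := by positivity
      nlinarith [hpipos (m + k) j]
    have hμlb2 : ∀ j, Mi m + ε * ε * (Ms m - Mi m) ≤ μ (m + k) j := by
      intro j
      rw [hμdef]
      rw [le_div_iff₀ (hpipos (m + k) j)]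
      have h1 := hlb2 j
      have h2 := hpile (m + k) j
      have h3 : 0 ≤ ε * ε * (Ms m - Mi m) := by positivity
      nlinarith [hpipos (m + k) j]
    have hMs2 : Ms (m + k) ≤ Ms m - ε * ε * (Ms m - Mi m) :=
      Finset.sup'_le hne _ fun j _ => hμub2 j
    have hMi2 : Mi m + ε * ε * (Ms m - Mi m) ≤ Mi (m + k) :=
      Finset.le_inf' hne _ fun j _ => hμlb2 j
    linarith
  -- geometric decay
  set c : ℝ := max (1 - 2 * (ε * ε)) 0 with hcdef
  have hc0 : (0 : ℝ) ≤ c := le_max_right _ _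
  have hc1 : c < 1 := max_lt (by nlinarith) one_pos
  have hoscmono : ∀ m n, Ms (m + n) - Mi (m + n) ≤ Ms m - Mi m := by
    intro m n
    have h1 := hMsmono m n
    have h2 := hMimono m n
    linarith
  have hgeo : ∀ n, Ms (k + n * k) - Mi (k + n * k) ≤ c ^ n * (Ms k - Mi k) := by
    intro n
    induction n with
    | zero => simp
    | succ n ih =>
      have he : k + (n + 1) * k = (k + n * k) + k := by ring
      rw [he]
      calc Ms ((k + n * k) + k) - Mi ((k + n * k) + k)
          ≤ (1 - 2 * (ε * ε)) * (Ms (k + n * k) - Mi (k + n * k)) :=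
            hcontr (k + n * k) (Nat.le_add_right k (n * k))
        _ ≤ c * (Ms (k + n * k) - Mi (k + n * k)) :=
            mul_le_mul_of_nonneg_right (le_max_left _ _) (hoscnn _)
        _ ≤ c * (c ^ n * (Ms k - Mi k)) := mul_le_mul_of_nonneg_left ih hc0
        _ = c ^ (n + 1) * (Ms k - Mi k) := by ring
  have hosc0 : Filter.Tendsto (fun m => Ms m - Mi m) Filter.atTop (nhds 0) := by
    have hdiv : Filter.Tendsto (fun m : ℕ => m / k - 1) Filter.atTop Filter.atTop := by
      rw [Filter.tendsto_atTop]
      intro b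
      filter_upwards [Filter.eventually_ge_atTop ((b + 2) * k)] with m hm
      have h2 : b + 2 ≤ m / k := (Nat.le_div_iff_mul_le (by omega)).mpr hm
      omega
    have hpow : Filter.Tendsto (fun n : ℕ => c ^ n) Filter.atTop (nhds 0) :=
      tendsto_pow_atTop_nhds_zero_of_lt_one hc0 hc1
    have hb : Filter.Tendsto (fun m : ℕ => c ^ (m / k - 1) * (Ms k - Mi k))
        Filter.atTop (nhds 0) := by
      have := (hpow.comp hdiv).mul_const (Ms k - Mi k)
      simpa using this
    refine squeeze_zero' (Filter.Eventually.of_forall hoscnn) ?_ hb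
    filter_upwards [Filter.eventually_ge_atTop k] with m hm
    have h1 : 1 ≤ m / k := (Nat.one_le_div_iff (by omega)).mpr hm
    have he : k + (m / k - 1) * k = (m / k) * k := by
      have h2 : m / k - 1 + 1 = m / k := Nat.sub_add_cancel h1
      calc k + (m / k - 1) * k = (m / k - 1 + 1) * k := by ring
        _ = (m / k) * k := by rw [h2]
    have hle2 : k + (m / k - 1) * k ≤ m := he ▸ Nat.div_mul_le_self m k
    have hm2 : m = (k + (m / k - 1) * k) + (m - (k + (m / k - 1) * k)) := by omega
    calc Ms m - Mi m
        ≤ Ms (k + (m / k - 1) * k) - Mi (k + (m / k - 1) * k) := by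
          have h4 := hoscmono (k + (m / k - 1) * k) (m - (k + (m / k - 1) * k))
          rw [← hm2] at h4
          exact h4
      _ ≤ c ^ (m / k - 1) * (Ms k - Mi k) := hgeo (m / k - 1)
  -- the limit is S / N
  have hSb : ∀ m, Mi m * N ≤ ∑ j, a 0 j ∧ ∑ j, a 0 j ≤ Ms m * N := by
    intro m
    constructor
    · calc Mi m * (N : ℝ) = ∑ i, Mi m * pi' m i := by rw [← Finset.mul_sum, hsumpi]
        _ ≤ ∑ i, μ m i * pi' m i := Finset.sum_le_sum fun i _ =>
            mul_le_mul_of_nonneg_right (hinf_le m i) (hpipos m i).le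
        _ = ∑ i, a m i := Finset.sum_congr rfl fun i _ => (havals m i).symm
        _ = ∑ j, a 0 j := hsuma m
    · calc ∑ j, a 0 j = ∑ i, a m i := (hsuma m).symm
        _ = ∑ i, μ m i * pi' m i := Finset.sum_congr rfl fun i _ => havals m i
        _ ≤ ∑ i, Ms m * pi' m i := Finset.sum_le_sum fun i _ =>
            mul_le_mul_of_nonneg_right (hle_sup m i) (hpipos m i).le
        _ = Ms m * (N : ℝ) := by rw [← Finset.mul_sum, hsumpi]
  intro j
  rw [tendsto_iff_dist_tendsto_zero]
  refine squeeze_zero (fun m => dist_nonneg) (fun m => ?_) hosc0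
  rw [Real.dist_eq]
  have h1 : Mi m ≤ a m j / pi' m j := hinf_le m j
  have h2 : a m j / pi' m j ≤ Ms m := hle_sup m j
  obtain ⟨hL1, hL2⟩ := hSb m
  have hL1' : Mi m ≤ (∑ j, a 0 j) / N := (le_div_iff₀ hNR).mpr hL1
  have hL2' : (∑ j, a 0 j) / N ≤ Ms m := (div_le_iff₀ hNR).mpr hL2
  rw [abs_sub_le_iff]
  constructor <;> linarith
end

section
/- For the closed-loop system x[k+1] = A x[k] + (Σ_j B_j K_j)(x[k] - ē[k]) with ē[k+1] = M ē[k], if both A + Σ_j B_j K_j and M are Schur stable, then x[k] → 0 as k → ∞ (separation principle for the finite-time-consensus scheme). -/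
open Matrix

/-- `M` is Schur stable: every (complex) eigenvalue has modulus `< 1`. -/
def schurStable {m : Type*} [Fintype m] [DecidableEq m] (M : Matrix m m ℝ) : Prop :=
  ∀ μ ∈ ((M.map (Complex.ofReal : ℝ → ℂ)).charpoly).roots, ‖μ‖ < 1

open Polynomial Filter Topology

lemma aux_mem_spectrum_iff_mem_roots {m : Type*} [Fintype m] [DecidableEq m]
    (T : Matrix m m ℂ) (z : ℂ) : z ∈ spectrum ℂ T ↔ z ∈ T.charpoly.roots := by
  rw [Polynomial.mem_roots (T.charpoly_monic.ne_zero), spectrum.mem_iff]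
  have halg : (algebraMap ℂ (Matrix m m ℂ)) z = Matrix.scalar m z := rfl
  have h1 : T.charpoly.eval z = (Matrix.scalar m z - T).det := by
    rw [Matrix.charpoly, _root_.eval_det, matPolyEquiv_charmatrix]
    simp
  rw [IsRoot.def, h1, halg, Matrix.isUnit_iff_isUnit_det, isUnit_iff_ne_zero, not_ne_iff]

section norm
attribute [local instance] Matrix.linftyOpNormedRing Matrix.linftyOpNormedAlgebra
  Matrix.linftyOpNormedSpace

lemma aux_norm_pow_tendsto {m : Type*} [Fintype m] [DecidableEq m] [Nonempty m]
    (T : Matrix m m ℝ) (h : schurStable T) :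
    Tendsto (fun k : ℕ => ‖(T.map (Complex.ofReal : ℝ → ℂ)) ^ k‖) atTop (𝓝 0) := by
  set Tc := T.map (Complex.ofReal : ℝ → ℂ) with hTc
  haveI : CompleteSpace (Matrix m m ℂ) :=
    FiniteDimensional.complete ℂ _
  haveI : Nontrivial (Matrix m m ℂ) := by
    inhabit m
    exact ⟨0, 1, fun hh => by simpa using congrFun (congrFun hh default) default⟩
  have hρ : spectralRadius ℂ Tc < 1 := by
    have := spectrum.spectralRadius_lt_of_forall_lt (a := Tc) (r := 1) (fun z hz => by
      have := h z ((aux_mem_spectrum_iff_mem_roots Tc z).mp hz)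
      simpa [← NNReal.coe_lt_coe] using this)
    simpa using this
  obtain ⟨r, hr1, hr2⟩ := exists_between hρ
  have hgel := spectrum.pow_nnnorm_pow_one_div_tendsto_nhds_spectralRadius Tc
  have hev : ∀ᶠ k : ℕ in atTop, ((‖Tc ^ k‖₊ : ENNReal) ^ (1 / (k:ℝ))) < r :=
    hgel.eventually_lt_const hr1
  have hrne : r ≠ ⊤ := (hr2.trans_le le_top).ne
  set c : ℝ := r.toReal with hc
  have hc0 : 0 ≤ c := ENNReal.toReal_nonneg
  have hc1 : c < 1 := by
    rw [hc, ← ENNReal.toReal_one]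
    exact ENNReal.toReal_strict_mono (by simp) hr2
  have hbound : ∀ᶠ k : ℕ in atTop, ‖Tc ^ k‖ ≤ c ^ k := by
    filter_upwards [hev, eventually_ge_atTop 1] with k hk hk1
    have hkne : (k:ℝ) ≠ 0 := Nat.cast_ne_zero.mpr (by omega)
    have h2 : ((‖Tc ^ k‖₊ : ENNReal) ^ (1 / (k:ℝ))) ^ (k:ℝ) ≤ r ^ (k:ℝ) :=
      ENNReal.rpow_le_rpow hk.le (by positivity)
    rw [← ENNReal.rpow_mul, one_div, inv_mul_cancel₀ hkne, ENNReal.rpow_one] at h2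
    have h3 : (‖Tc ^ k‖₊ : ENNReal) ≤ r ^ (k:ℕ) := by
      rwa [← ENNReal.rpow_natCast r k]
    have h4 := ENNReal.toReal_mono (by simp [ENNReal.pow_ne_top hrne]) h3
    simpa [ENNReal.toReal_pow, ← hc, coe_nnnorm] using h4
  exact squeeze_zero' (Eventually.of_forall fun k => norm_nonneg _) hbound
    (tendsto_pow_atTop_nhds_zero_of_lt_one hc0 hc1)

lemma aux_pow_mulVec_tendsto {m : Type*} [Fintype m] [DecidableEq m]
    (T : Matrix m m ℝ) (h : schurStable T) (v : m → ℝ) :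
    Tendsto (fun k : ℕ => (T ^ k) *ᵥ v) atTop (𝓝 0) := by
  rcases isEmpty_or_nonempty m with hm | hm
  · have : (fun k : ℕ => (T ^ k) *ᵥ v) = fun _ => 0 := by
      funext k; exact funext fun i => hm.elim i
    rw [this]; exact tendsto_const_nhds
  set Tc := T.map (Complex.ofReal : ℝ → ℂ) with hTc
  set vc : m → ℂ := fun i => (v i : ℂ) with hvc
  have hmap : ∀ k : ℕ, Tc ^ k = (T ^ k).map (Complex.ofReal : ℝ → ℂ) := by
    intro k
    have : Tc = Complex.ofRealHom.mapMatrix T := rfl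
    rw [this, ← map_pow]
    rfl
  have hentry : ∀ (k : ℕ) (i : m), ((Tc ^ k) *ᵥ vc) i = (((T ^ k) *ᵥ v) i : ℂ) := by
    intro k i
    rw [hmap k]
    simp [Matrix.mulVec, dotProduct, Matrix.map_apply, hvc]
  have key : ∀ (k : ℕ) (i : m), |((T ^ k) *ᵥ v) i| ≤ ‖Tc ^ k‖ * ‖vc‖ := by
    intro k i
    have h1 : |((T ^ k) *ᵥ v) i| = ‖((Tc ^ k) *ᵥ vc) i‖ := by
      rw [hentry k i, Complex.norm_real, Real.norm_eq_abs]
    rw [h1]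
    exact (norm_le_pi_norm _ i).trans (Matrix.linfty_opNorm_mulVec _ _)
  rw [tendsto_pi_nhds]
  intro i
  refine squeeze_zero_norm (fun k => by simpa [Real.norm_eq_abs] using key k i) ?_
  simpa using (aux_norm_pow_tendsto T h).mul_const ‖vc‖
end norm

/-- Schur stability of a block upper-triangular matrix from that of the blocks. -/
lemma aux_schur_fromBlocks {n : ℕ} (P Q M : Matrix (Fin n) (Fin n) ℝ)
    (h1 : schurStable P) (h2 : schurStable M) :
    schurStable (Matrix.fromBlocks P Q 0 M) := by
  intro μ hμ
  have hmap : (Matrix.fromBlocks P Q 0 M).map (Complex.ofReal : ℝ → ℂ) =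
      Matrix.fromBlocks (P.map Complex.ofReal) (Q.map Complex.ofReal) 0
        (M.map Complex.ofReal) := by
    rw [Matrix.fromBlocks_map]
    congr 1
  rw [hmap, Matrix.charpoly_fromBlocks_zero₂₁] at hμ
  rw [Polynomial.roots_mul (mul_ne_zero (Matrix.charpoly_monic _).ne_zero
    (Matrix.charpoly_monic _).ne_zero), Multiset.mem_add] at hμ
  rcases hμ with hμ | hμ
  · exact h1 μ hμ
  · exact h2 μ hμ

/-- Separation principle for the finite-time-consensus scheme: for the cascade
`x[k+1] = (A + Σ_j B_j K_j) x[k] - (Σ_j B_j K_j) ē[k]`, `ē[k+1] = M ē[k]` with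
`M = A - (1/N) Σ_l L_l C_l`, Schur stability of `A + Σ_j B_j K_j` and of `M` implies
`x[k] → 0`. -/
theorem stmt18 {n N : ℕ} {p q : Fin N → ℕ}
    (A : Matrix (Fin n) (Fin n) ℝ)
    (B : ∀ i, Matrix (Fin n) (Fin (q i)) ℝ) (K : ∀ i, Matrix (Fin (q i)) (Fin n) ℝ)
    (C : ∀ i, Matrix (Fin (p i)) (Fin n) ℝ) (L : ∀ i, Matrix (Fin n) (Fin (p i)) ℝ)
    (M : Matrix (Fin n) (Fin n) ℝ)
    (hM : M = A - (N : ℝ)⁻¹ • ∑ l, L l * C l)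
    (x ebar : ℕ → Fin n → ℝ)
    (hx : ∀ k, x (k + 1) =
      (A + ∑ j, B j * K j) *ᵥ x k - (∑ j, B j * K j) *ᵥ ebar k)
    (hebar : ∀ k, ebar (k + 1) = M *ᵥ ebar k)
    (hs1 : schurStable (A + ∑ j, B j * K j))
    (hs2 : schurStable M) :
    Filter.Tendsto x Filter.atTop (nhds 0) := by
  set P : Matrix (Fin n) (Fin n) ℝ := A + ∑ j, B j * K j with hP
  set Q : Matrix (Fin n) (Fin n) ℝ := ∑ j, B j * K j with hQ
  set T : Matrix (Fin n ⊕ Fin n) (Fin n ⊕ Fin n) ℝ := Matrix.fromBlocks P (-Q) 0 M with hT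
  set z : ℕ → (Fin n ⊕ Fin n) → ℝ := fun k => Sum.elim (x k) (ebar k) with hz
  have hstep : ∀ k, z (k + 1) = T *ᵥ z k := by
    intro k
    rw [hz, hT]
    simp only
    rw [Matrix.fromBlocks_mulVec, Sum.elim_comp_inl, Sum.elim_comp_inr]
    have h1 : P *ᵥ x k + (-Q) *ᵥ ebar k = x (k + 1) := by
      rw [Matrix.neg_mulVec, hx k, ← sub_eq_add_neg]
    have h2 : (0 : Matrix (Fin n) (Fin n) ℝ) *ᵥ x k + M *ᵥ ebar k = ebar (k + 1) := by
      rw [Matrix.zero_mulVec, zero_add, hebar k]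
    rw [h1, h2]
  have hzk : ∀ k, z k = (T ^ k) *ᵥ z 0 := by
    intro k
    induction k with
    | zero => simp
    | succ k ih =>
      rw [hstep k, ih, Matrix.mulVec_mulVec, ← pow_succ']
  have hTs : schurStable T := aux_schur_fromBlocks P (-Q) M hs1 hs2
  have hzt : Tendsto z atTop (𝓝 0) := by
    have := aux_pow_mulVec_tendsto T hTs (z 0)
    simpa [← funext hzk] using this
  rw [tendsto_pi_nhds]
  intro i
  have := (continuous_apply (Sum.inl i : Fin n ⊕ Fin n)).continuousAt.tendsto.comp hzt
  simpa [hz, Function.comp_def] using this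
end
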